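/- Let G be a finite Abelian group and H a subgroup. Then |H| · |H^⊥| = |G|, where H^⊥ = {x ∈ G : x * y = 0 for all y ∈ H} with respect to the pseudo inner product. -/
import Mathlib


open Finset

/-- `G = ZMod (p 0 ^ m 0) × ⋯ × ZMod (p (n-1) ^ m (n-1))`. -/
abbrev Gp (n : ℕ) (p m : Fin n → ℕ) := ∀ i : Fin n, ZMod (p i ^ m i)

/-- `L = lcm (p i ^ m i)`. -/
abbrev Lnum (n : ℕ) (p m : Fin n → ℕ) : ℕ := Finset.univ.lcm fun i : Fin n => p i ^ m i

/-- The pseudo inner product `r * x = (∑ i, (L / pᵢ^mᵢ) rⁱ xⁱ) mod L`, valued in `ℤ_L`. -/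
def pip {n : ℕ} {p m : Fin n → ℕ} (r x : Gp n p m) : ZMod (Lnum n p m) :=
  ∑ i : Fin n, (((Lnum n p m / p i ^ m i) * (r i).val * (x i).val : ℕ) : ZMod (Lnum n p m))

section Aux

variable {n : ℕ} {p m : Fin n → ℕ} [∀ i, NeZero (p i ^ m i)]

lemma q_dvd_L (i : Fin n) : p i ^ m i ∣ Lnum n p m := Finset.dvd_lcm (mem_univ i)

lemma Lnum_ne_zero : Lnum n p m ≠ 0 := by
  intro h
  rw [Finset.lcm_eq_zero_iff] at h
  obtain ⟨i, -, hi⟩ := h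
  exact (NeZero.ne (p i ^ m i)) hi

instance : NeZero (Lnum n p m) := ⟨Lnum_ne_zero⟩

/-- The canonical embedding `ZMod (pᵢ^mᵢ) →+ ZMod L`, `c ↦ (L / pᵢ^mᵢ) * c`. -/
noncomputable def iota (p m : Fin n → ℕ) [∀ i, NeZero (p i ^ m i)] (i : Fin n) :
    ZMod (p i ^ m i) →+ ZMod (Lnum n p m) :=
  ZMod.lift (p i ^ m i)
    ⟨zmultiplesHom _ ((Lnum n p m / p i ^ m i : ℕ) : ZMod (Lnum n p m)), by
      simp only [zmultiplesHom_apply, natCast_zsmul, nsmul_eq_mul, ← Nat.cast_mul,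
        Nat.mul_div_cancel' (q_dvd_L i), ZMod.natCast_self]⟩

lemma iota_natCast (i : Fin n) (a : ℕ) :
    iota p m i (a : ZMod (p i ^ m i)) = ((Lnum n p m / p i ^ m i) * a : ℕ) := by
  have : ((a : ℤ) : ZMod (p i ^ m i)) = (a : ZMod (p i ^ m i)) := by push_cast; ring
  rw [← this, iota, ZMod.lift_coe]
  simp only [zmultiplesHom_apply, natCast_zsmul, nsmul_eq_mul, ← Nat.cast_mul, mul_comm]

lemma iota_modEq (i : Fin n) {a b : ℕ} (h : a ≡ b [MOD p i ^ m i]) :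
    (((Lnum n p m / p i ^ m i) * a : ℕ) : ZMod (Lnum n p m))
      = ((Lnum n p m / p i ^ m i) * b : ℕ) := by
  rw [ZMod.natCast_eq_natCast_iff]
  have := h.mul_left' (c := Lnum n p m / p i ^ m i)
  rwa [Nat.div_mul_cancel (q_dvd_L i)] at this

lemma pip_eq (r x : Gp n p m) : pip r x = ∑ i : Fin n, iota p m i (r i * x i) := by
  unfold pip
  refine Finset.sum_congr rfl fun i _ => ?_
  conv_rhs => rw [← ZMod.natCast_zmod_val (r i * x i), iota_natCast]
  rw [ZMod.val_mul]
  rw [iota_modEq i (Nat.mod_modEq _ _), mul_assoc]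

lemma iota_eq_zero {i : Fin n} {c : ZMod (p i ^ m i)} (h : iota p m i c = 0) : c = 0 := by
  rw [← ZMod.natCast_zmod_val c, iota_natCast, ZMod.natCast_eq_zero_iff] at h
  have hL : Lnum n p m = (Lnum n p m / p i ^ m i) * (p i ^ m i) := by
    rw [Nat.div_mul_cancel (q_dvd_L i)]
  have h0 : Lnum n p m / p i ^ m i ≠ 0 := by
    intro h0
    exact Lnum_ne_zero (n := n) (p := p) (m := m) (by rw [hL, h0, zero_mul])
  have hq : p i ^ m i ∣ c.val := by
    have h' : (Lnum n p m / p i ^ m i) * (p i ^ m i) ∣ (Lnum n p m / p i ^ m i) * c.val := by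
      rwa [Nat.div_mul_cancel (q_dvd_L i)]
    exact (mul_dvd_mul_iff_left h0).mp h'
  have hv : c.val = 0 := Nat.eq_zero_of_dvd_of_lt hq (ZMod.val_lt c)
  exact (ZMod.val_eq_zero c).mp hv

end Aux

section Aux2

set_option linter.unusedSectionVars false

variable {n : ℕ} {p m : Fin n → ℕ} [∀ i, NeZero (p i ^ m i)]

/-- `pip r ·` as an additive monoid hom. -/
noncomputable def pipHom (r : Gp n p m) : Gp n p m →+ ZMod (Lnum n p m) :=
  AddMonoidHom.mk' (fun x => pip r x) (by
    intro x y
    simp only [pip_eq]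
    rw [← Finset.sum_add_distrib]
    exact Finset.sum_congr rfl fun i _ => by rw [Pi.add_apply, mul_add, map_add])

@[simp] lemma pipHom_apply (r x : Gp n p m) : pipHom r x = pip r x := rfl

lemma pipHom_add (r s : Gp n p m) : pipHom (r + s) = pipHom r + pipHom s := by
  refine AddMonoidHom.ext fun x => ?_
  rw [AddMonoidHom.add_apply]
  simp only [pipHom_apply, pip_eq]
  rw [← Finset.sum_add_distrib]
  exact Finset.sum_congr rfl fun i _ => by rw [Pi.add_apply, add_mul, map_add]

end Aux2

/-- The faithful character `ZMod N →+ Additive Circle`. -/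
noncomputable def eps (N : ℕ) [NeZero N] : ZMod N →+ Additive Circle :=
  (ZMod.toCircle (N := N)).toAddMonoidHom

lemma eps_injective (N : ℕ) [NeZero N] : Function.Injective (eps N) := by
  intro a b h
  exact ZMod.injective_toCircle (congrArg Additive.toMul h)

lemma eps_eq_zero_iff {N : ℕ} [NeZero N] {a : ZMod N} : eps N a = 0 ↔ a = 0 := by
  constructor
  · intro h
    exact eps_injective N (by rw [h, map_zero])
  · rintro rfl; exact map_zero _

/-- `Nat.card (A →+ Additive Circle) = Nat.card A` for finite abelian `A`. -/
lemma card_addHom_circle (A : Type*) [AddCommGroup A] [Finite A] :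
    Nat.card (A →+ Additive Circle) = Nat.card A := by
  have : Fintype A := Fintype.ofFinite A
  rw [← Nat.card_congr (AddChar.toAddMonoidHomEquiv (A := A) (M := Circle)),
    Nat.card_congr (AddChar.circleEquivComplex (α := A)).toEquiv,
    Nat.card_eq_fintype_card, Nat.card_eq_fintype_card, AddChar.card_eq]

section Main

set_option linter.unusedSectionVars false

variable {n : ℕ} {p m : Fin n → ℕ} [∀ i, NeZero (p i ^ m i)]

/-- The pairing map `G →+ (G →+ Additive Circle)`. -/
noncomputable def Phi (n : ℕ) (p m : Fin n → ℕ) [∀ i, NeZero (p i ^ m i)] :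
    Gp n p m →+ (Gp n p m →+ Additive Circle) :=
  AddMonoidHom.mk' (fun r => (eps (Lnum n p m)).comp (pipHom r)) (by
    intro r s
    show (eps (Lnum n p m)).comp (pipHom (r + s)) = _
    rw [pipHom_add]
    refine AddMonoidHom.ext fun x => ?_
    simp [AddMonoidHom.add_apply, AddMonoidHom.comp_apply, map_add])

@[simp] lemma Phi_apply (r x : Gp n p m) : Phi n p m r x = eps (Lnum n p m) (pip r x) := rfl

lemma pip_single (r : Gp n p m) (i : Fin n) :
    pip r (Pi.single i 1) = iota p m i (r i) := by
  classical
  rw [pip_eq, Finset.sum_eq_single i]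
  · rw [Pi.single_eq_same, mul_one]
  · intro j _ hj
    rw [Pi.single_eq_of_ne hj, mul_zero, map_zero]
  · intro h; exact absurd (mem_univ i) h

lemma Phi_injective : Function.Injective (Phi n p m) := by
  intro r s h
  funext i
  have h1 : eps (Lnum n p m) (pip r (Pi.single i 1))
      = eps (Lnum n p m) (pip s (Pi.single i 1)) := by
    have := DFunLike.congr_fun h (Pi.single i 1)
    simpa using this
  have h2 : pip r (Pi.single i 1) = pip s (Pi.single i 1) := eps_injective _ h1
  rw [pip_single, pip_single] at h2
  have h3 : iota p m i (r i - s i) = 0 := by rw [map_sub, h2, sub_self]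
  exact sub_eq_zero.mp (iota_eq_zero h3)

lemma Phi_bijective : Function.Bijective (Phi n p m) := by
  have hfin : Finite (Gp n p m →+ Additive Circle) :=
    Nat.finite_of_card_ne_zero (by
      rw [card_addHom_circle]
      exact Nat.card_pos.ne')
  rw [Nat.bijective_iff_injective_and_card]
  exact ⟨Phi_injective, (card_addHom_circle _).symm⟩

/-- Restriction to a subgroup. -/
noncomputable def resH (H : AddSubgroup (Gp n p m)) :
    (Gp n p m →+ Additive Circle) →+ (H →+ Additive Circle) :=
  AddMonoidHom.mk' (fun f => f.comp H.subtype) (fun f g => rfl)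

@[simp] lemma resH_apply (H : AddSubgroup (Gp n p m)) (f : Gp n p m →+ Additive Circle)
    (h : H) : resH H f h = f h.1 := rfl

/-- The kernel of restriction is the characters of the quotient. -/
noncomputable def kerResEquiv (H : AddSubgroup (Gp n p m)) :
    (resH H).ker ≃ ((Gp n p m ⧸ H) →+ Additive Circle) where
  toFun f := QuotientAddGroup.lift H f.1 (fun h hh => by
    have h2 : resH H f.1 = 0 := f.2
    have := DFunLike.congr_fun h2 (⟨h, hh⟩ : H)
    simpa using this)
  invFun g := ⟨g.comp (QuotientAddGroup.mk' H), by
    have : resH H (g.comp (QuotientAddGroup.mk' H)) = 0 := by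
      refine AddMonoidHom.ext fun h => ?_
      have : QuotientAddGroup.mk' H h.1 = 0 := (QuotientAddGroup.eq_zero_iff _).mpr h.2
      simp only [resH_apply, AddMonoidHom.comp_apply, this, map_zero]
      rfl
    exact this⟩
  left_inv f := Subtype.ext (AddMonoidHom.ext fun x => rfl)
  right_inv g := AddMonoidHom.ext fun x =>
    QuotientAddGroup.induction_on x (fun z => rfl)

end Main

lemma card_hom_ker_mul_card_range {G M : Type*} [AddCommGroup G] [AddCommGroup M]
    (f : G →+ M) : Nat.card G = Nat.card f.range * Nat.card f.ker := by
  rw [AddSubgroup.card_eq_card_quotient_mul_card_addSubgroup f.ker,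
    Nat.card_congr (QuotientAddGroup.quotientKerEquivRange f).toEquiv]

/-- For a subgroup `H` of `G`, `|H| · |H^⊥| = |G|`, where `H^⊥` is the orthogonal subgroup
with respect to the pseudo inner product. -/
theorem card_mul_card_perp (n : ℕ) (p m : Fin n → ℕ) (hp : ∀ i, (p i).Prime)
    [∀ i, NeZero (p i ^ m i)] (H : AddSubgroup (Gp n p m)) :
    Nat.card H * Nat.card {x : Gp n p m // ∀ y ∈ H, pip x y = 0}
      = Nat.card (Gp n p m) := by
  classical
  set Ψ : Gp n p m →+ (H →+ Additive Circle) := (resH H).comp (Phi n p m) with hΨ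
  -- cardinality of the kernel of the restriction map
  have hkerres : Nat.card (resH (n := n) (p := p) (m := m) H).ker
      = Nat.card (Gp n p m ⧸ H) := by
    rw [Nat.card_congr (kerResEquiv H), card_addHom_circle]
  -- Lagrange
  have hLag : Nat.card (Gp n p m) = Nat.card (Gp n p m ⧸ H) * Nat.card H :=
    AddSubgroup.card_eq_card_quotient_mul_card_addSubgroup H
  -- cardinality of range of resH
  have hsplit := card_hom_ker_mul_card_range (resH (n := n) (p := p) (m := m) H)
  rw [card_addHom_circle, hkerres] at hsplit
  have hQpos : Nat.card (Gp n p m ⧸ H) ≠ 0 := Nat.card_pos.ne'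
  have hrange : Nat.card (resH (n := n) (p := p) (m := m) H).range = Nat.card H := by
    have h2 : Nat.card (resH (n := n) (p := p) (m := m) H).range * Nat.card (Gp n p m ⧸ H)
        = Nat.card H * Nat.card (Gp n p m ⧸ H) := by
      rw [← hsplit, hLag, mul_comm]
    exact Nat.eq_of_mul_eq_mul_right (Nat.pos_of_ne_zero hQpos) h2
  -- resH is surjective
  have hfinH : Finite (H →+ Additive Circle) :=
    Nat.finite_of_card_ne_zero (by rw [card_addHom_circle]; exact Nat.card_pos.ne')
  have hres_surj : Function.Surjective (resH (n := n) (p := p) (m := m) H) := by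
    rw [← AddMonoidHom.range_eq_top]
    exact AddSubgroup.eq_top_of_card_eq _ (by rw [hrange, card_addHom_circle])
  -- Ψ is surjective
  have hΨsurj : Function.Surjective Ψ := hres_surj.comp Phi_bijective.surjective
  -- card range Ψ = card H
  have hΨrange : Nat.card Ψ.range = Nat.card H := by
    rw [AddMonoidHom.range_eq_top.mpr hΨsurj, AddSubgroup.card_top, card_addHom_circle]
  -- ker Ψ is the perp
  have hker_iff : ∀ x : Gp n p m, (∀ y ∈ H, pip x y = 0) ↔ x ∈ Ψ.ker := by
    intro x
    rw [AddMonoidHom.mem_ker]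
    constructor
    · intro hx
      refine AddMonoidHom.ext fun h => ?_
      show eps (Lnum n p m) (pip x h.1) = 0
      rw [hx h.1 h.2, map_zero]
    · intro hx y hy
      have := DFunLike.congr_fun hx (⟨y, hy⟩ : H)
      exact eps_eq_zero_iff.mp this
  have hperp : Nat.card {x : Gp n p m // ∀ y ∈ H, pip x y = 0} = Nat.card Ψ.ker :=
    Nat.card_congr (Equiv.subtypeEquivRight hker_iff)
  rw [hperp, ← hΨrange]
  exact (card_hom_ker_mul_card_range Ψ).symm
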